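/- Let n ≥ 2 and η > 0, and for each prime p let G^{(p)} be a polynomial system of type η over 𝔽_p with uniformly bounded implied constant. Then the measures μ_{G^{(p)}} equidistribute: for every continuous f : 𝕋ⁿ → ℂ with absolutely summable Fourier series, ∫_{𝕋ⁿ} f dμ_{G^{(p)}} → ∫_{𝕋ⁿ} f(x) dx as p → ∞. -/

import Mathlib

open scoped Real
open MeasureTheory

instance : Fact ((0:ℝ) < 1) := ⟨one_pos⟩

/-- `e_p(r) = exp(2πi r / p)`. -/
noncomputable def ep (p : ℕ) (r : ℤ) : ℂ :=
  Complex.exp (2 * Real.pi * Complex.I * r / p)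

/-- The Weyl sum `S_G(v)` attached to a polynomial system `G` over `𝔽_p`. -/
noncomputable def weylSum (p m n : ℕ) [NeZero p] (G : Fin n → MvPolynomial (Fin m) (ZMod p))
    (v : Fin n → ℤ) : ℂ :=
  ∑ x : Fin m → ZMod p,
    ep p (((∑ j, (v j : ZMod p) * MvPolynomial.eval x (G j)).val : ℕ) : ℤ)

/-- The point `G(x)/p ∈ 𝕋ⁿ`. -/
noncomputable def torusPoint (p m n : ℕ) [NeZero p]
    (G : Fin n → MvPolynomial (Fin m) (ZMod p)) (x : Fin m → ZMod p) :
    Fin n → AddCircle (1:ℝ) :=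
  fun j => ((((MvPolynomial.eval x (G j)).val : ℝ) / p : ℝ) : AddCircle (1:ℝ))

/-- The Euclidean (geodesic) distance on the torus `𝕋ⁿ`. -/
noncomputable def torusDist {n : ℕ} (t y : Fin n → AddCircle (1:ℝ)) : ℝ :=
  Real.sqrt (∑ j, ‖t j - y j‖ ^ 2)

/-- The closed geodesic Euclidean ball of radius `R` centered at `y` in `𝕋ⁿ`. -/
def torusBall {n : ℕ} (y : Fin n → AddCircle (1:ℝ)) (R : ℝ) :
    Set (Fin n → AddCircle (1:ℝ)) :=
  {t | torusDist t y ≤ R}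

/-- The measure `μ_G` of a set `B ⊆ 𝕋ⁿ`: the proportion of `x ∈ 𝔽_p^m` with `G(x)/p ∈ B`. -/
noncomputable def muG (p m n : ℕ) [NeZero p] (G : Fin n → MvPolynomial (Fin m) (ZMod p))
    (B : Set (Fin n → AddCircle (1:ℝ))) : ℝ :=
  (Nat.card {x : Fin m → ZMod p // torusPoint p m n G x ∈ B} : ℝ) / (p : ℝ) ^ m

/-- The Lebesgue volume of a Euclidean `n`-ball of radius `R`. -/
noncomputable def ballVol (n : ℕ) (R : ℝ) : ℝ :=
  (volume (Metric.closedBall (0 : EuclideanSpace ℝ (Fin n)) R)).toReal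

/-- The `v`-th Fourier coefficient `f̂(v) = ∫_{𝕋ⁿ} f(t) e(-v·t) dt`. -/
noncomputable def fourierCoeffTorus (n : ℕ) (f : (Fin n → AddCircle (1:ℝ)) → ℂ)
    (v : Fin n → ℤ) : ℂ :=
  ∫ t : Fin n → AddCircle (1:ℝ), f t * ∏ j, fourier (-(v j)) (t j)

/-!
Expanding `f` in its absolutely convergent Fourier series, the average of `f` over the points
`G(x)/p` is `∑_v f̂(v) S_G(v) / p^m`, while `∫ f = f̂(0)`. The Weyl sum equals `p^m` for
`v ∈ pℤⁿ` and is at most `C₀ p^{m-η}` otherwise, so the error is at most `∑_v |f̂(v)| w_p(v)`,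
where `w_p(v)` is `1` on `pℤⁿ ∖ {0}` and `C₀ p^{-η}` off `pℤⁿ`. A fixed `v ≠ 0` leaves `pℤⁿ` once
`p` exceeds its coordinates, so `w_p(v) → 0`; the weights are uniformly bounded, and dominated
convergence for series finishes the proof.
-/

open Filter Topology UnitAddTorus

lemma volume_unitAddCircle :
    (volume : Measure (AddCircle (1:ℝ))) = AddCircle.haarAddCircle := by
  simp [AddCircle.volume_eq_smul_haarAddCircle]

-- Mathlib's multivariate Fourier theory integrates against the product of `haarAddCircle`.
lemma fourierCoeffTorus_eq_mFourierCoeff (n : ℕ) (f : (Fin n → AddCircle (1:ℝ)) → ℂ) :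
    fourierCoeffTorus n f = mFourierCoeff f := by
  ext v
  calc fourierCoeffTorus n f v
      = ∫ t, mFourier (-v) t * f t ∂Measure.pi fun _ ↦ AddCircle.haarAddCircle := by
        rw [fourierCoeffTorus, volume_pi, volume_unitAddCircle]
        simp [mFourier, mul_comm]
    _ = mFourierCoeff f v := rfl

lemma integral_eq_fourierCoeffTorus_zero (n : ℕ) (f : (Fin n → AddCircle (1:ℝ)) → ℂ) :
    ∫ t, f t = fourierCoeffTorus n f 0 := by
  simp [fourierCoeffTorus]

lemma hasSum_fourierCoeffTorus_mul_mFourier {n : ℕ} {f : (Fin n → AddCircle (1:ℝ)) → ℂ}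
    (hf : Continuous f) (hsum : Summable fun v ↦ ‖fourierCoeffTorus n f v‖)
    (t : Fin n → AddCircle (1:ℝ)) :
    HasSum (fun v ↦ fourierCoeffTorus n f v * mFourier v t) (f t) := by
  rw [fourierCoeffTorus_eq_mFourierCoeff] at hsum ⊢
  exact hasSum_mFourier_series_apply_of_summable (f := ⟨f, hf⟩) hsum.of_norm t

section WeylSum

variable {p m n : ℕ} [NeZero p]

lemma ep_eq_stdAddChar (r : ℤ) : ep p r = ZMod.stdAddChar (r : ZMod p) :=
  (ZMod.stdAddChar_coe r).symm

lemma mFourier_torusPoint (G : Fin n → MvPolynomial (Fin m) (ZMod p)) (v : Fin n → ℤ)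
    (x : Fin m → ZMod p) :
    mFourier v (torusPoint p m n G x)
      = ZMod.stdAddChar (∑ j, (v j : ZMod p) * MvPolynomial.eval x (G j)) := by
  calc mFourier v (torusPoint p m n G x)
      = ep p (∑ j, v j * ((MvPolynomial.eval x (G j)).val : ℤ)) := by
        simp only [mFourier, torusPoint, ep, ContinuousMap.coe_mk, fourier_coe_apply,
          ← Complex.exp_sum]
        push_cast
        rw [Finset.mul_sum, Finset.sum_div]
        exact congrArg _ (Finset.sum_congr rfl fun j _ ↦ by ring)
    _ = _ := by
        rw [ep_eq_stdAddChar]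
        push_cast [ZMod.natCast_val, ZMod.cast_id', id]
        rfl

lemma weylSum_eq_sum_mFourier (G : Fin n → MvPolynomial (Fin m) (ZMod p)) (v : Fin n → ℤ) :
    weylSum p m n G v = ∑ x, mFourier v (torusPoint p m n G x) := by
  simp only [weylSum, mFourier_torusPoint, ep_eq_stdAddChar]
  push_cast [ZMod.natCast_val, ZMod.cast_id', id]
  rfl

lemma weylSum_of_forall_dvd (G : Fin n → MvPolynomial (Fin m) (ZMod p)) {v : Fin n → ℤ}
    (hv : ∀ j, (p : ℤ) ∣ v j) : weylSum p m n G v = (p : ℂ) ^ m := by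
  have hv0 : ∀ j, (v j : ZMod p) = 0 := fun j ↦ (ZMod.intCast_zmod_eq_zero_iff_dvd _ _).2 (hv j)
  simp [weylSum_eq_sum_mFourier, mFourier_torusPoint, hv0, ZMod.card]

end WeylSum

section Weight

variable {n : ℕ}

noncomputable def weylWeight (C₀ η : ℝ) (p : ℕ) (v : Fin n → ℤ) : ℝ :=
  if v = 0 then 0 else if ∀ j, (p : ℤ) ∣ v j then 1 else C₀ * (p : ℝ) ^ (-η)

lemma abs_weylWeight_le {C₀ η : ℝ} (hη : 0 ≤ η) {p : ℕ} (hp : 1 ≤ p) (v : Fin n → ℤ) :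
    |weylWeight C₀ η p v| ≤ max 1 |C₀| := by
  have hpη : (p : ℝ) ^ (-η) ≤ 1 := Real.rpow_le_one_of_one_le_of_nonpos (by exact_mod_cast hp)
    (neg_nonpos.2 hη)
  unfold weylWeight
  split_ifs
  · simp
  · simp
  · rw [abs_mul, abs_of_nonneg (by positivity : (0 : ℝ) ≤ (p : ℝ) ^ (-η))]
    exact le_max_of_le_right (mul_le_of_le_one_right (abs_nonneg _) hpη)

lemma eventually_not_forall_dvd {v : Fin n → ℤ} (hv : v ≠ 0) :
    ∀ᶠ p : ℕ in atTop, ¬ ∀ j, (p : ℤ) ∣ v j := by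
  obtain ⟨j, hj⟩ := Function.ne_iff.1 hv
  filter_upwards [eventually_gt_atTop (v j).natAbs] with p hp hdvd
  exact hj (Int.eq_zero_of_dvd_of_natAbs_lt_natAbs (hdvd j) (by simpa using hp))

lemma tendsto_weylWeight {C₀ η : ℝ} (hη : 0 < η) (v : Fin n → ℤ) :
    Tendsto (fun p : ℕ ↦ weylWeight C₀ η p v) atTop (𝓝 0) := by
  by_cases hv : v = 0
  · simp [weylWeight, hv]
  have hdecay : Tendsto (fun p : ℕ ↦ C₀ * (p : ℝ) ^ (-η)) atTop (𝓝 0) := by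
    simpa using ((tendsto_rpow_neg_atTop hη).comp tendsto_natCast_atTop_atTop).const_mul C₀
  refine hdecay.congr' ?_
  filter_upwards [eventually_not_forall_dvd hv] with p hp
  simp [weylWeight, hv, hp]

lemma tendsto_tsum_mul_weylWeight {C₀ η : ℝ} (hη : 0 < η) {a : (Fin n → ℤ) → ℝ}
    (ha : Summable a) : Tendsto (fun p : ℕ ↦ ∑' v, a v * weylWeight C₀ η p v) atTop (𝓝 0) := by
  have hlim : Tendsto (fun p : ℕ ↦ ∑' v, a v * weylWeight C₀ η p v) atTop
      (𝓝 (∑' v : Fin n → ℤ, a v * 0)) :=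
    tendsto_tsum_of_dominated_convergence (bound := fun v ↦ |a v| * max 1 |C₀|)
      (ha.abs.mul_right _) (fun v ↦ (tendsto_weylWeight hη v).const_mul (a v))
      (by
        filter_upwards [eventually_ge_atTop 1] with p hp v
        rw [norm_mul, Real.norm_eq_abs, Real.norm_eq_abs]
        exact mul_le_mul_of_nonneg_left (abs_weylWeight_le hη.le hp v) (abs_nonneg _))
  simpa using hlim

end Weight

section Average

variable {p m n : ℕ} [NeZero p]

lemma norm_weylSum_div_sub_le {G : Fin n → MvPolynomial (Fin m) (ZMod p)} {C₀ η : ℝ}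
    (hG : ∀ v : Fin n → ℤ, ¬ (∀ j, (p : ℤ) ∣ v j) →
      ‖weylSum p m n G v‖ ≤ C₀ * (p : ℝ) ^ ((m : ℝ) - η)) (v : Fin n → ℤ) :
    ‖weylSum p m n G v / (p : ℂ) ^ m - if v = 0 then 1 else 0‖ ≤ weylWeight C₀ η p v := by
  have hp : (0 : ℝ) < p := Nat.cast_pos.2 (Nat.pos_of_neZero p)
  unfold weylWeight
  split_ifs with hv0 hdvd
  · simp [hv0, weylSum_of_forall_dvd, NeZero.ne]
  · simp [weylSum_of_forall_dvd G hdvd, NeZero.ne]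
  · rw [sub_zero, norm_div, norm_pow, Complex.norm_natCast, div_le_iff₀ (by positivity),
      mul_assoc, ← Real.rpow_natCast, ← Real.rpow_add hp, neg_add_eq_sub]
    exact hG v hdvd

lemma hasSum_average_torusPoint (G : Fin n → MvPolynomial (Fin m) (ZMod p))
    {f : (Fin n → AddCircle (1:ℝ)) → ℂ} (hf : Continuous f)
    (hsum : Summable fun v ↦ ‖fourierCoeffTorus n f v‖) :
    HasSum (fun v ↦ fourierCoeffTorus n f v * (weylSum p m n G v / (p : ℂ) ^ m))
      ((1 / (p : ℂ) ^ m) * ∑ x, f (torusPoint p m n G x)) := by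
  have hpoint x := hasSum_fourierCoeffTorus_mul_mFourier hf hsum (torusPoint p m n G x)
  refine ((hasSum_sum fun x _ ↦ hpoint x).mul_left (1 / (p : ℂ) ^ m)).congr_fun fun v ↦ ?_
  rw [← Finset.mul_sum, weylSum_eq_sum_mFourier]
  ring

lemma norm_average_sub_integral_le {G : Fin n → MvPolynomial (Fin m) (ZMod p)} {C₀ η : ℝ}
    (hη : 0 ≤ η)
    (hG : ∀ v : Fin n → ℤ, ¬ (∀ j, (p : ℤ) ∣ v j) →
      ‖weylSum p m n G v‖ ≤ C₀ * (p : ℝ) ^ ((m : ℝ) - η))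
    {f : (Fin n → AddCircle (1:ℝ)) → ℂ} (hf : Continuous f)
    (hsum : Summable fun v ↦ ‖fourierCoeffTorus n f v‖) :
    ‖(1 / (p : ℂ) ^ m) * (∑ x, f (torusPoint p m n G x)) - ∫ t, f t‖
      ≤ ∑' v, ‖fourierCoeffTorus n f v‖ * weylWeight C₀ η p v := by
  set a := fourierCoeffTorus n f
  have herror : HasSum (fun v ↦ a v * (weylSum p m n G v / (p : ℂ) ^ m - if v = 0 then 1 else 0))
      ((1 / (p : ℂ) ^ m) * (∑ x, f (torusPoint p m n G x)) - ∫ t, f t) := by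
    rw [integral_eq_fourierCoeffTorus_zero]
    refine ((hasSum_average_torusPoint G hf hsum).sub (hasSum_ite_eq 0 (a 0))).congr_fun
      fun v ↦ ?_
    split_ifs with hv <;> simp [hv, mul_sub, a]
  have hbound : Summable fun v ↦ ‖a v‖ * weylWeight C₀ η p v :=
    .of_norm_bounded (hsum.mul_right (max 1 |C₀|)) fun v ↦ by
      rw [norm_mul, norm_norm, Real.norm_eq_abs]
      exact mul_le_mul_of_nonneg_left
        (abs_weylWeight_le hη (Nat.one_le_iff_ne_zero.2 (NeZero.ne p)) v) (norm_nonneg _)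
  refine herror.norm_le_of_bounded hbound.hasSum fun v ↦ ?_
  rw [norm_mul]
  exact mul_le_mul_of_nonneg_left (norm_weylSum_div_sub_le hG v) (norm_nonneg _)

end Average

theorem equidistribution_muG_general (n m : ℕ) (η C₀ : ℝ)
    (hη : 0 < η)
    (G : (p : ℕ) → Fin n → MvPolynomial (Fin m) (ZMod p))
    (hG : ∀ (p : ℕ) [NeZero p], p.Prime →
      ∀ v : Fin n → ℤ, ¬ (∀ j, (p : ℤ) ∣ v j) →
        ‖weylSum p m n (G p) v‖ ≤ C₀ * (p : ℝ) ^ ((m : ℝ) - η))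
    (f : (Fin n → AddCircle (1:ℝ)) → ℂ) (hf : Continuous f)
    (hsum : Summable (fun v : Fin n → ℤ => ‖fourierCoeffTorus n f v‖)) :
    ∀ ε > 0, ∃ P : ℕ, ∀ (p : ℕ) [NeZero p], P ≤ p → p.Prime →
      ‖(1 / (p : ℂ) ^ m) * (∑ x : Fin m → ZMod p, f (torusPoint p m n (G p) x))
          - ∫ t : Fin n → AddCircle (1:ℝ), f t‖ ≤ ε := by
  intro ε hε
  obtain ⟨P, hP⟩ :=
    eventually_atTop.1 ((tendsto_tsum_mul_weylWeight hη hsum).eventually_le_const hε)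
  exact ⟨P, fun p _ hPp hp ↦
    (norm_average_sub_integral_le hη.le (hG p hp) hf hsum).trans (hP p hPp)⟩

/-- Equidistribution: if `G^{(p)}` is of type `η > 0` over `𝔽_p` with uniformly bounded
implied constant, then `∫ f dμ_{G^{(p)}} → ∫ f dx` as `p → ∞`, for every continuous `f`
with absolutely summable Fourier series. -/
theorem equidistribution_muG (n m : ℕ) (hn : 2 ≤ n) (hm : 1 ≤ m) (η C₀ : ℝ)
    (hη : 0 < η) (hC₀ : 0 < C₀)
    (G : (p : ℕ) → Fin n → MvPolynomial (Fin m) (ZMod p))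
    (hG : ∀ (p : ℕ) [NeZero p], p.Prime →
      ∀ v : Fin n → ℤ, ¬ (∀ j, (p : ℤ) ∣ v j) →
        ‖weylSum p m n (G p) v‖ ≤ C₀ * (p : ℝ) ^ ((m : ℝ) - η))
    (f : (Fin n → AddCircle (1:ℝ)) → ℂ) (hf : Continuous f)
    (hsum : Summable (fun v : Fin n → ℤ => ‖fourierCoeffTorus n f v‖)) :
    ∀ ε > 0, ∃ P : ℕ, ∀ (p : ℕ) [NeZero p], P ≤ p → p.Prime →
      ‖(1 / (p : ℂ) ^ m) * (∑ x : Fin m → ZMod p, f (torusPoint p m n (G p) x))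
          - ∫ t : Fin n → AddCircle (1:ℝ), f t‖ ≤ ε :=
  equidistribution_muG_general n m η C₀ hη G hG f hf hsum
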